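/- arXiv:2212.05826 — 5 statements merged into one kernel-verified Lean document; each statement's English description precedes it below -/
import Mathlib

section
/- Let F : (ℝᵐ,0) → (ℝᵖ,0) and G : (ℝᵖ,0) → (ℝᵏ,0), with m ≥ p ≥ k ≥ 2, be analytic map germs such that F has isolated singular value (Sing F ⊆ F⁻¹(0)) and G has an isolated singular point at the origin (Sing G ⊆ {0}). Then the Milnor sets of H = G ∘ F and F satisfy the inclusion M(H) ∖ H⁻¹(0) ⊆ M(F) ∖ F⁻¹(0). -/
/-!
Wherever `G : ℝᵐ → ℝᵖ` is differentiable, the gradients of its components span the range of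
the adjoint `dG(x)*`, so a regular point `x` lies in `M(G)` iff `∇ρ(x) ∈ range dG(x)*`.
Off `H⁻¹(0)` we have `F x ≠ 0`, so `x` is a regular point of `F` and `F x` one of `G`; hence
`dH(x) = dG(F x) ∘ dF(x)` is onto and `x` is a regular point of `H`. The chain rule gives `dH(x)* = dF(x)* ∘ dG(F x)*`,
whose range lies in that of `dF(x)*`.
-/

open Metric Set
open scoped InnerProduct

/-- The singular set of a map `G : ℝᵐ → ℝᵖ`: points where the derivative has rank `< p`. -/
noncomputable def singSet {m p : ℕ}
    (G : EuclideanSpace ℝ (Fin m) → EuclideanSpace ℝ (Fin p)) :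
    Set (EuclideanSpace ℝ (Fin m)) :=
  {x | LinearMap.rank
      ((fderiv ℝ G x : EuclideanSpace ℝ (Fin m) →L[ℝ] EuclideanSpace ℝ (Fin p)) :
        EuclideanSpace ℝ (Fin m) →ₗ[ℝ] EuclideanSpace ℝ (Fin p)) < (p : Cardinal)}

/-- The Milnor set of `G`: points that are singular for `G`, or where the gradient of the
distance function `ρ(x) = ‖x‖` lies in the span of the gradients of the components of `G`. -/
noncomputable def milnorSet {m p : ℕ}
    (G : EuclideanSpace ℝ (Fin m) → EuclideanSpace ℝ (Fin p)) :
    Set (EuclideanSpace ℝ (Fin m)) :=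
  {x | x ∈ singSet G ∨
    gradient (fun y : EuclideanSpace ℝ (Fin m) => ‖y‖) x ∈
      Submodule.span ℝ (Set.range fun i : Fin p =>
        gradient (fun y : EuclideanSpace ℝ (Fin m) => G y i) x)}

theorem LinearMap.rank_lt_finrank_iff_not_surjective {K V W : Type*} [DivisionRing K]
    [AddCommGroup V] [Module K V] [AddCommGroup W] [Module K W] [FiniteDimensional K W]
    (f : V →ₗ[K] W) : f.rank < Module.finrank K W ↔ ¬ Function.Surjective f := by
  rw [← LinearMap.range_eq_top, LinearMap.rank, ← Submodule.finrank_eq_rank, Nat.cast_lt]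
  exact ⟨fun h htop => h.ne (htop ▸ finrank_top K W), Submodule.finrank_lt⟩

section Gradient

variable {E : Type*} [NormedAddCommGroup E] [InnerProductSpace ℝ E] [CompleteSpace E]
  {ι : Type*} [Fintype ι] [DecidableEq ι] {f : E → EuclideanSpace ℝ ι} {x : E}

open ContinuousLinearMap in
theorem gradient_apply_eq_adjoint_single (hf : DifferentiableAt ℝ f x) (i : ι) :
    gradient (fun y => f y i) x = ((fderiv ℝ f x)†) (EuclideanSpace.single i 1) := by
  have hproj : HasFDerivAt (fun y => f y i)
      ((EuclideanSpace.proj i : EuclideanSpace ℝ ι →L[ℝ] ℝ).comp (fderiv ℝ f x)) x :=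
    (EuclideanSpace.proj i : EuclideanSpace ℝ ι →L[ℝ] ℝ).hasFDerivAt.comp x hf.hasFDerivAt
  refine ext_inner_right ℝ fun v => ?_
  rw [gradient, hproj.fderiv, InnerProductSpace.toDual_symm_apply, adjoint_inner_left,
    EuclideanSpace.inner_single_left]
  simp

theorem span_range_gradient_apply_eq_range_adjoint (hf : DifferentiableAt ℝ f x) :
    Submodule.span ℝ (range fun i => gradient (fun y => f y i) x) =
      LinearMap.range ((fderiv ℝ f x)†).toLinearMap := by
  rw [LinearMap.range_eq_map, ← (EuclideanSpace.basisFun ι ℝ).toBasis.span_eq,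
    Submodule.map_span, ← range_comp]
  congr with i
  simp [gradient_apply_eq_adjoint_single hf]

end Gradient

section MilnorSet

variable {m p k : ℕ}

theorem notMem_singSet_iff {G : EuclideanSpace ℝ (Fin m) → EuclideanSpace ℝ (Fin p)}
    {x : EuclideanSpace ℝ (Fin m)} :
    x ∉ singSet G ↔ Function.Surjective (fderiv ℝ G x) := by
  have h := LinearMap.rank_lt_finrank_iff_not_surjective
    (fderiv ℝ G x : EuclideanSpace ℝ (Fin m) →ₗ[ℝ] EuclideanSpace ℝ (Fin p))
  rw [finrank_euclideanSpace_fin] at h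
  exact h.not_left

theorem mem_milnorSet_iff {G : EuclideanSpace ℝ (Fin m) → EuclideanSpace ℝ (Fin p)}
    {x : EuclideanSpace ℝ (Fin m)} (hG : DifferentiableAt ℝ G x) :
    x ∈ milnorSet G ↔ x ∈ singSet G ∨
      gradient (fun y => ‖y‖) x ∈ LinearMap.range ((fderiv ℝ G x)†).toLinearMap := by
  rw [← span_range_gradient_apply_eq_range_adjoint hG]
  rfl

theorem mem_milnorSet_of_mem_milnorSet_comp
    {F : EuclideanSpace ℝ (Fin m) → EuclideanSpace ℝ (Fin p)}
    {G : EuclideanSpace ℝ (Fin p) → EuclideanSpace ℝ (Fin k)} {x : EuclideanSpace ℝ (Fin m)}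
    (hF : DifferentiableAt ℝ F x) (hG : DifferentiableAt ℝ G (F x))
    (hxF : x ∉ singSet F) (hxG : F x ∉ singSet G) (hx : x ∈ milnorSet (G ∘ F)) :
    x ∈ milnorSet F := by
  have hcomp := fderiv_comp x hG hF
  rw [notMem_singSet_iff] at hxF hxG
  have hxGF : x ∉ singSet (G ∘ F) := by
    rw [notMem_singSet_iff, hcomp, ContinuousLinearMap.coe_comp]
    exact hxG.comp hxF
  rw [mem_milnorSet_iff (hG.comp x hF), hcomp, ContinuousLinearMap.adjoint_comp] at hx
  rw [mem_milnorSet_iff hF]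
  exact Or.inr (LinearMap.range_comp_le_range _ _ (hx.resolve_left hxGF))

end MilnorSet

theorem stmt1_general {m p k : ℕ}
    (F : EuclideanSpace ℝ (Fin m) → EuclideanSpace ℝ (Fin p))
    (G : EuclideanSpace ℝ (Fin p) → EuclideanSpace ℝ (Fin k))
    (hFan : ∀ x, AnalyticAt ℝ F x) (hGan : ∀ y, AnalyticAt ℝ G y)
    (hG0 : G 0 = 0)
    (hFsing : singSet F ⊆ F ⁻¹' {0})
    (hGsing : singSet G ⊆ {0}) :
    milnorSet (G ∘ F) \ (G ∘ F) ⁻¹' {0} ⊆ milnorSet F \ F ⁻¹' {0} := by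
  rintro x ⟨hxH, hHx⟩
  have hFx : F x ≠ 0 := fun h => hHx (by simp [h, hG0])
  exact ⟨mem_milnorSet_of_mem_milnorSet_comp (hFan x).differentiableAt
    (hGan (F x)).differentiableAt (fun h => hFx (hFsing h)) (fun h => hFx (hGsing h)) hxH, hFx⟩

/-- If `F` is analytic with isolated singular value and `G` is analytic with
an isolated singular point at the origin, `m ≥ p ≥ k ≥ 2`, then the Milnor sets of `H = G ∘ F`
and `F` satisfy `M(H) \ H⁻¹(0) ⊆ M(F) \ F⁻¹(0)`. -/
theorem stmt1 {m p k : ℕ} (hk : 2 ≤ k) (hkp : k ≤ p) (hpm : p ≤ m)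
    (F : EuclideanSpace ℝ (Fin m) → EuclideanSpace ℝ (Fin p))
    (G : EuclideanSpace ℝ (Fin p) → EuclideanSpace ℝ (Fin k))
    (hFan : ∀ x, AnalyticAt ℝ F x) (hGan : ∀ y, AnalyticAt ℝ G y)
    (hF0 : F 0 = 0) (hG0 : G 0 = 0)
    (hFsing : singSet F ⊆ F ⁻¹' {0})
    (hGsing : singSet G ⊆ {0}) :
    milnorSet (G ∘ F) \ (G ∘ F) ⁻¹' {0} ⊆ milnorSet F \ F ⁻¹' {0} :=
  stmt1_general F G hFan hGan hG0 hFsing hGsing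
end

section
/- Let G : (ℝᵐ,0) → (ℝᵖ,0), m ≥ p > 0, be an analytic map germ such that the germ of Sing G ∩ G⁻¹(0) at 0 is not equal to the germ of G⁻¹(0) at 0 (i.e., in every small ball around 0 the fibre G⁻¹(0) contains regular points of G). Then the germ of the image of G at 0 is all of (ℝᵖ,0): for every sufficiently small ε > 0 the image G(B_ε) contains an open neighborhood of 0 in ℝᵖ. -/
open Metric Set

/-- Let `G : (ℝᵐ,0) → (ℝᵖ,0)`, `m ≥ p > 0`, be analytic such that the germ of
`Sing G ∩ G⁻¹(0)` at `0` is not the germ of `G⁻¹(0)`, i.e. in every small ball around `0` the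
fibre `G⁻¹(0)` contains regular points of `G`. Then the germ of `Im G` at `0` is `(ℝᵖ,0)`:
for every sufficiently small `ε > 0` the image `G(B_ε)` contains an open neighbourhood of
`0` in `ℝᵖ`. -/
theorem stmt9 {m p : ℕ} (hp : 0 < p) (hpm : p ≤ m)
    (G : EuclideanSpace ℝ (Fin m) → EuclideanSpace ℝ (Fin p))
    (hGan : ∀ x, AnalyticAt ℝ G x) (hG0 : G 0 = 0)
    (hreg : ∀ ε > (0 : ℝ), ∃ x ∈ ball (0 : EuclideanSpace ℝ (Fin m)) ε,
      G x = 0 ∧ x ∉ singSet G) :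
    ∃ ε₀ > (0 : ℝ), ∀ ε, 0 < ε → ε ≤ ε₀ →
      ∃ δ > (0 : ℝ), ball (0 : EuclideanSpace ℝ (Fin p)) δ ⊆ G '' ball 0 ε := by
  refine ⟨1, one_pos, fun ε hε _ => ?_⟩
  obtain ⟨x, hx, hGx, hsing⟩ := hreg ε hε
  -- the derivative at x is surjective
  have hrange : LinearMap.range
      ((fderiv ℝ G x : EuclideanSpace ℝ (Fin m) →L[ℝ] EuclideanSpace ℝ (Fin p)) :
        EuclideanSpace ℝ (Fin m) →ₗ[ℝ] EuclideanSpace ℝ (Fin p)) = ⊤ := by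
    set f := ((fderiv ℝ G x : EuclideanSpace ℝ (Fin m) →L[ℝ] EuclideanSpace ℝ (Fin p)) :
        EuclideanSpace ℝ (Fin m) →ₗ[ℝ] EuclideanSpace ℝ (Fin p))
    have h : ¬ LinearMap.rank f < (p : Cardinal) := hsing
    have h1 : LinearMap.rank f ≤ (p : Cardinal) := by
      have := LinearMap.rank_le_range f
      refine this.trans_eq ?_
      rw [rank_eq_card_basis (EuclideanSpace.basisFun (Fin p) ℝ).toBasis]
      simp
    have h2 : LinearMap.rank f = (p : Cardinal) := le_antisymm h1 (not_lt.1 h)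
    have h3 : Module.finrank ℝ (LinearMap.range f) = p := by
      have : Module.rank ℝ (LinearMap.range f) = (p : Cardinal) := h2
      rw [Module.finrank, this]; simp
    apply Submodule.eq_top_of_finrank_eq
    rw [h3, finrank_euclideanSpace]; simp
  have hstrict := (hGan x).hasStrictFDerivAt
  have hmap : Filter.map G (nhds x) = nhds (G x) :=
    hstrict.map_nhds_eq_of_surj hrange
  have hball : ball (0 : EuclideanSpace ℝ (Fin m)) ε ∈ nhds x :=
    isOpen_ball.mem_nhds hx
  have himg : G '' ball (0 : EuclideanSpace ℝ (Fin m)) ε ∈ nhds (0 : EuclideanSpace ℝ (Fin p)) := by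
    rw [← hGx, ← hmap]
    exact Filter.image_mem_map hball
  obtain ⟨δ, hδ, hsub⟩ := Metric.mem_nhds_iff.1 himg
  exact ⟨δ, hδ, hsub⟩
end

section
/- Let G : (ℝᵐ,0) → (ℝᵖ,0), m ≥ p ≥ 2, be a non-constant analytic map germ with isolated singular value (Sing G ⊆ G⁻¹(0)) which is ρ-regular (tame). Then the germ of the image of G at the origin equals (ℝᵖ,0): for every sufficiently small ε > 0 the image G(B_ε) contains an open neighborhood of 0 in ℝᵖ. -/
open Metric Set

/-- `G` is ρ-regular (tame): as germs at `0`,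
`closure (M(G) \ G⁻¹(0)) ∩ G⁻¹(0) ⊆ {0}`. -/
def rhoRegular {m p : ℕ}
    (G : EuclideanSpace ℝ (Fin m) → EuclideanSpace ℝ (Fin p)) : Prop :=
  ∃ ε₀ > (0 : ℝ),
    closure (milnorSet G \ G ⁻¹' {0}) ∩ G ⁻¹' {0} ∩ ball 0 ε₀ ⊆ {0}


/-!
Off the zero fibre `G` is a submersion, so `G` maps open sets avoiding `G⁻¹(0)` to open sets.
Tameness and compactness of the sphere `‖x‖ = ε` give `δ > 0` such that no Milnor point on that
sphere has `0 < ‖G x‖ < δ`. If `0 < ‖v‖ < δ` and `v ∈ G(B̄_ε)`, a preimage of `v` of least norm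
minimises `ρ` on its fibre, hence is a Milnor point by Lagrange multipliers, hence lies in the
open ball `B_ε`. So `G(B_ε)` meets the punctured ball `B_δ \ {0}` in a set that is open, closed
in `B_δ \ {0}` and nonempty (`G` is not identically zero near `0`); as the punctured ball is
connected for `p ≥ 2`, it is all of it.
-/

open Topology Filter

theorem range_fderiv_eq_top_of_notMem_singSet {m p : ℕ}
    {G : EuclideanSpace ℝ (Fin m) → EuclideanSpace ℝ (Fin p)}
    {x : EuclideanSpace ℝ (Fin m)} (hx : x ∉ singSet G) :
    (fderiv ℝ G x).range = ⊤ := by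
  replace hx : (p : Cardinal) ≤ _ := not_lt.1 hx
  rw [LinearMap.rank, ← Module.finrank_eq_rank] at hx
  refine Submodule.eq_top_of_finrank_eq (le_antisymm (Submodule.finrank_le _) ?_)
  rw [finrank_euclideanSpace_fin]
  exact_mod_cast hx

section StrictFDeriv

variable {E F : Type*} [NormedAddCommGroup E] [NormedSpace ℝ E] [CompleteSpace E]
  [NormedAddCommGroup F] [NormedSpace ℝ F] [CompleteSpace F]

theorem IsLocalExtrOn.exists_linearMap_of_hasStrictFDerivAt_of_range_eq_top {f : E → F}
    {φ : E → ℝ} {x₀ : E} {f' : E →L[ℝ] F} {φ' : StrongDual ℝ E}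
    (hextr : IsLocalExtrOn φ {x | f x = f x₀} x₀) (hf' : HasStrictFDerivAt f f' x₀)
    (hφ' : HasStrictFDerivAt φ φ' x₀) (hsurj : f'.range = ⊤) :
    ∃ Λ : Module.Dual ℝ F, ∀ v, φ' v = Λ (f' v) := by
  obtain ⟨Λ, Λ₀, hne, hΛ⟩ := hextr.exists_linear_map_of_hasStrictFDerivAt hf' hφ'
  have hΛ₀ : Λ₀ ≠ 0 := by
    rintro rfl
    refine hne (Prod.ext ?_ rfl)
    ext w
    obtain ⟨v, rfl⟩ := LinearMap.range_eq_top.1 hsurj w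
    simpa using hΛ v
  refine ⟨-Λ₀⁻¹ • Λ, fun v => ?_⟩
  have hv := hΛ v
  simp only [smul_eq_mul] at hv
  simp only [LinearMap.smul_apply, smul_eq_mul]
  field_simp
  linear_combination hv

theorem isOpen_image_of_hasStrictFDerivAt_of_range_eq_top {G : E → F} {G' : E → E →L[ℝ] F}
    {s : Set E} (hs : IsOpen s)
    (hG : ∀ x ∈ s, HasStrictFDerivAt G (G' x) x) (hsurj : ∀ x ∈ s, (G' x).range = ⊤) :
    IsOpen (G '' s) := by
  rw [isOpen_iff_mem_nhds]
  rintro _ ⟨x, hx, rfl⟩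
  rw [← (hG x hx).map_nhds_eq_of_surj (hsurj x hx)]
  exact image_mem_map (hs.mem_nhds hx)

end StrictFDeriv

theorem gradient_mem_span_gradient_of_fderiv_eq {E : Type*} [NormedAddCommGroup E]
    [InnerProductSpace ℝ E] [CompleteSpace E] {p : ℕ} {G : E → EuclideanSpace ℝ (Fin p)}
    {f : E → ℝ} {x : E} (hG : DifferentiableAt ℝ G x)
    (Λ : Module.Dual ℝ (EuclideanSpace ℝ (Fin p)))
    (hf : ∀ v, fderiv ℝ f x v = Λ (fderiv ℝ G x v)) :
    gradient f x ∈ Submodule.span ℝ (range fun i => gradient (fun y => G y i) x) := by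
  have hcomp : ∀ i, fderiv ℝ (fun y => G y i) x =
      (EuclideanSpace.proj i : EuclideanSpace ℝ (Fin p) →L[ℝ] ℝ).comp (fderiv ℝ G x) := by
    intro i
    exact ((EuclideanSpace.proj i).hasFDerivAt.comp x hG.hasFDerivAt).fderiv
  have hsum : fderiv ℝ f x =
      ∑ i, Λ (EuclideanSpace.single i 1) • fderiv ℝ (fun y => G y i) x := by
    ext v
    conv_lhs => rw [hf, ← (EuclideanSpace.basisFun (Fin p) ℝ).sum_repr (fderiv ℝ G x v)]
    simp [hcomp, mul_comm]
  rw [Submodule.mem_span_range_iff_exists_fun]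
  exact ⟨fun i => Λ (EuclideanSpace.single i 1), by simp [gradient, hsum]⟩

theorem mem_milnorSet_of_isLocalExtrOn {m p : ℕ}
    {G : EuclideanSpace ℝ (Fin m) → EuclideanSpace ℝ (Fin p)} {x : EuclideanSpace ℝ (Fin m)}
    (hG : HasStrictFDerivAt G (fderiv ℝ G x) x) (hx : x ≠ 0)
    (hextr : IsLocalExtrOn (fun y => ‖y‖) {y | G y = G x} x) :
    x ∈ milnorSet G := by
  by_cases hsing : x ∈ singSet G
  · exact Or.inl hsing
  have hnorm : HasStrictFDerivAt (fun y : EuclideanSpace ℝ (Fin m) => ‖y‖)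
      (fderiv ℝ (fun y => ‖y‖) x) x :=
    (contDiffAt_norm ℝ hx).hasStrictFDerivAt one_ne_zero
  obtain ⟨Λ, hΛ⟩ := hextr.exists_linearMap_of_hasStrictFDerivAt_of_range_eq_top hG hnorm
    (range_fderiv_eq_top_of_notMem_singSet hsing)
  exact Or.inr (gradient_mem_span_gradient_of_fderiv_eq hG.differentiableAt Λ hΛ)

theorem IsCompact.exists_pos_forall_le_norm {X F : Type*} [TopologicalSpace X]
    [NormedAddCommGroup F] {K : Set X} (hK : IsCompact K) {G : X → F} (hG : ContinuousOn G K)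
    (hG0 : ∀ x ∈ K, G x ≠ 0) : ∃ δ > 0, ∀ x ∈ K, δ ≤ ‖G x‖ := by
  rcases K.eq_empty_or_nonempty with rfl | hne
  · exact ⟨1, one_pos, by simp⟩
  obtain ⟨y, hy, hmin⟩ := hK.exists_isMinOn hne (continuous_norm.comp_continuousOn hG)
  exact ⟨‖G y‖, norm_pos_iff.2 (hG0 y hy), hmin⟩

theorem exists_pos_le_norm_of_mem_milnorSet_sphere {m p : ℕ}
    {G : EuclideanSpace ℝ (Fin m) → EuclideanSpace ℝ (Fin p)} (hG : Continuous G) {ε₀ r : ℝ}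
    (hreg : closure (milnorSet G \ G ⁻¹' {0}) ∩ G ⁻¹' {0} ∩ ball 0 ε₀ ⊆ {0})
    (hr : 0 < r) (hrε₀ : r < ε₀) :
    ∃ δ > 0, ∀ x ∈ milnorSet G, G x ≠ 0 → ‖x‖ = r → δ ≤ ‖G x‖ := by
  have hK : IsCompact (closure (milnorSet G \ G ⁻¹' {0}) ∩ sphere 0 r) :=
    (isCompact_sphere 0 r).inter_left isClosed_closure
  obtain ⟨δ, hδ, hle⟩ := hK.exists_pos_forall_le_norm hG.continuousOn <| by
    rintro y ⟨hy, hyr⟩ hGy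
    have hy0 : y = 0 := hreg ⟨⟨hy, hGy⟩, by simpa [mem_sphere_zero_iff_norm.1 hyr] using hrε₀⟩
    simp [hy0, hr.ne] at hyr
  exact ⟨δ, hδ, fun x hx hGx hxr =>
    hle x ⟨subset_closure ⟨hx, hGx⟩, mem_sphere_zero_iff_norm.2 hxr⟩⟩

theorem exists_isMinOn_norm_fiber {E F : Type*} [NormedAddCommGroup E] [ProperSpace E]
    [TopologicalSpace F] [T1Space F] {G : E → F} (hG : Continuous G) (x₁ : E) :
    ∃ x₀, G x₀ = G x₁ ∧ IsMinOn (fun y => ‖y‖) {y | G y = G x₁} x₀ := by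
  have hK : IsCompact ({y | G y = G x₁} ∩ closedBall 0 ‖x₁‖) :=
    (isCompact_closedBall 0 _).inter_left (isClosed_singleton.preimage hG)
  obtain ⟨x₀, ⟨hx₀, -⟩, hmin⟩ :=
    hK.exists_isMinOn ⟨x₁, rfl, by simp⟩ continuous_norm.continuousOn
  refine ⟨x₀, hx₀, fun y hy => ?_⟩
  have hx₀x₁ : ‖x₀‖ ≤ ‖x₁‖ := hmin ⟨rfl, by simp⟩
  by_cases hyx₁ : ‖y‖ ≤ ‖x₁‖
  · exact hmin ⟨hy, by simpa using hyx₁⟩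
  · exact hx₀x₁.trans (le_of_not_ge hyx₁)

theorem isPreconnected_ball_zero_diff_zero {F : Type*} [NormedAddCommGroup F]
    [NormedSpace ℝ F] (hF : 1 < Module.rank ℝ F) (δ : ℝ) :
    IsPreconnected (ball (0 : F) δ \ {0}) := by
  rcases le_or_gt δ 0 with hδ | hδ
  · simp [ball_eq_empty.2 hδ, isPreconnected_empty]
  have hpolar : ball (0 : F) δ \ {0} =
      (fun z : ℝ × F => z.1 • z.2) '' (Ioo 0 δ ×ˢ sphere 0 1) := by
    ext v
    constructor
    · rintro ⟨hvδ, hv0 : v ≠ 0⟩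
      refine ⟨(‖v‖, ‖v‖⁻¹ • v), ⟨⟨norm_pos_iff.2 hv0, mem_ball_zero_iff.1 hvδ⟩, ?_⟩, ?_⟩
      · simp [norm_smul, norm_ne_zero_iff.2 hv0]
      · simp [smul_smul, norm_ne_zero_iff.2 hv0]
    · rintro ⟨⟨t, u⟩, ⟨⟨ht0, htδ⟩, hu⟩, rfl⟩
      have hu : ‖u‖ = 1 := mem_sphere_zero_iff_norm.1 hu
      refine ⟨?_, ?_⟩
      · simpa [norm_smul, hu, abs_of_pos ht0] using htδ
      · simp [ht0.ne', ← norm_ne_zero_iff, hu]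
  rw [hpolar]
  exact (((isConnected_Ioo hδ).prod (isConnected_sphere hF 0 zero_le_one)).image _
    continuous_smul.continuousOn).isPreconnected

theorem ball_subset_image_ball_of_isMinOn_norm {E F : Type*} [NormedAddCommGroup E]
    [NormedSpace ℝ E] [ProperSpace E] [NormedAddCommGroup F] [NormedSpace ℝ F] [CompleteSpace F]
    (hF : 1 < Module.rank ℝ F) {G : E → F} {G' : E → E →L[ℝ] F} (hG : Continuous G)
    (hG0 : G 0 = 0) (hnc : ∃ᶠ x in 𝓝 0, G x ≠ 0)
    (hG' : ∀ x, G x ≠ 0 → HasStrictFDerivAt G (G' x) x)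
    (hsurj : ∀ x, G x ≠ 0 → (G' x).range = ⊤) {r δ : ℝ} (hr : 0 < r) (hδ : 0 < δ)
    (hsphere : ∀ x, G x ≠ 0 → ‖G x‖ < δ → IsMinOn (fun y => ‖y‖) {y | G y = G x} x → ‖x‖ ≠ r) :
    ball 0 δ ⊆ G '' ball 0 r := by
  set U := G '' ball 0 r \ {0}
  set V := (G '' closedBall 0 r)ᶜ
  have hU : IsOpen U := by
    have hUeq : U = G '' (ball 0 r \ G ⁻¹' {0}) := by
      ext v
      simp only [U, Set.mem_sdiff, mem_image, mem_preimage]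
      grind
    rw [hUeq]
    exact isOpen_image_of_hasStrictFDerivAt_of_range_eq_top
      (isOpen_ball.sdiff (isClosed_singleton.preimage hG)) (fun x hx => hG' x hx.2)
      (fun x hx => hsurj x hx.2)
  have hV : IsOpen V := ((isCompact_closedBall 0 r).image hG).isClosed.isOpen_compl
  have hUV : Disjoint U V :=
    disjoint_left.2 fun v hv hvV => hvV (image_mono ball_subset_closedBall hv.1)
  have hcover : ball 0 δ \ {0} ⊆ U ∪ V := by
    rintro v ⟨hvδ, hv0 : v ≠ 0⟩
    refine (em (v ∈ V)).elim Or.inr fun hvV => Or.inl ⟨?_, hv0⟩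
    obtain ⟨x₁, hx₁r, rfl⟩ := not_not.1 hvV
    obtain ⟨x₀, hx₀, hmin⟩ := exists_isMinOn_norm_fiber hG x₁
    have hx₀r : ‖x₀‖ ≤ r := (hmin rfl).trans (mem_closedBall_zero_iff.1 hx₁r)
    rw [← hx₀] at hv0 hvδ hmin
    exact ⟨x₀, mem_ball_zero_iff.2 (hx₀r.lt_of_ne
      (hsphere x₀ hv0 (mem_ball_zero_iff.1 hvδ) hmin)), hx₀⟩
  have hmeet : (ball 0 δ \ {0} ∩ U).Nonempty := by
    have hsmall : ∀ᶠ x in 𝓝 (0 : E), G x ∈ ball 0 δ ∧ x ∈ ball 0 r :=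
      ((hG.tendsto' 0 0 hG0).eventually (ball_mem_nhds 0 hδ)).and (ball_mem_nhds 0 hr)
    obtain ⟨x, hx0, hxδ, hxr⟩ := (hnc.and_eventually hsmall).exists
    exact ⟨G x, ⟨hxδ, hx0⟩, ⟨x, hxr, rfl⟩, hx0⟩
  have hsubU := (isPreconnected_ball_zero_diff_zero hF δ).subset_left_of_subset_union
    hU hV hUV hcover hmeet
  intro v hv
  rcases eq_or_ne v 0 with rfl | hv0
  · exact ⟨0, mem_ball_self hr, hG0⟩
  · exact (hsubU ⟨hv, hv0⟩).1

theorem stmt10_general {m p : ℕ} (hp : 2 ≤ p)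
    (G : EuclideanSpace ℝ (Fin m) → EuclideanSpace ℝ (Fin p))
    (hGan : ∀ x, AnalyticAt ℝ G x) (hG0 : G 0 = 0)
    (hnc : ¬ ∀ᶠ x in nhds (0 : EuclideanSpace ℝ (Fin m)), G x = 0)
    (hGsing : singSet G ⊆ G ⁻¹' {0})
    (hGreg : rhoRegular G) :
    ∃ ε₀ > (0 : ℝ), ∀ ε, 0 < ε → ε ≤ ε₀ →
      ∃ δ > (0 : ℝ), ball (0 : EuclideanSpace ℝ (Fin p)) δ ⊆ G '' ball 0 ε := by
  obtain ⟨ε₀, hε₀, hreg⟩ := hGreg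
  have hGcont : Continuous G := continuous_iff_continuousAt.2 fun x => (hGan x).continuousAt
  have hrank : 1 < Module.rank ℝ (EuclideanSpace ℝ (Fin p)) := by
    rw [← Module.finrank_eq_rank, finrank_euclideanSpace_fin]
    exact_mod_cast hp
  refine ⟨ε₀ / 2, by positivity, fun ε hε hεle => ?_⟩
  obtain ⟨δ, hδ, hsphere⟩ :=
    exists_pos_le_norm_of_mem_milnorSet_sphere hGcont hreg hε (by linarith)
  refine ⟨δ, hδ, ball_subset_image_ball_of_isMinOn_norm hrank hGcont hG0
    (Filter.not_eventually.1 hnc) (fun x _ => (hGan x).hasStrictFDerivAt)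
    (fun x hx => range_fderiv_eq_top_of_notMem_singSet fun hs => hx (hGsing hs)) hε hδ ?_⟩
  intro x hx hxδ hmin hxr
  have hx0 : x ≠ 0 := by
    rintro rfl
    exact hx hG0
  have hxM :=
    mem_milnorSet_of_isLocalExtrOn (hGan x).hasStrictFDerivAt hx0 (Or.inl hmin.localize)
  exact (hsphere x hxM hx hxr).not_gt hxδ

/-- Let `G : (ℝᵐ,0) → (ℝᵖ,0)`, `m ≥ p ≥ 2`, be a non-constant analytic map
germ with isolated singular value (`Sing G ⊆ G⁻¹(0)`) which is ρ-regular (tame). Then the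
germ of `Im G` at the origin equals `(ℝᵖ,0)`: for every sufficiently small `ε > 0` the image
`G(B_ε)` contains an open neighbourhood of `0` in `ℝᵖ`. -/
theorem stmt10 {m p : ℕ} (hp : 2 ≤ p) (hpm : p ≤ m)
    (G : EuclideanSpace ℝ (Fin m) → EuclideanSpace ℝ (Fin p))
    (hGan : ∀ x, AnalyticAt ℝ G x) (hG0 : G 0 = 0)
    (hnc : ¬ ∀ᶠ x in nhds (0 : EuclideanSpace ℝ (Fin m)), G x = 0)
    (hGsing : singSet G ⊆ G ⁻¹' {0})
    (hGreg : rhoRegular G) :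
    ∃ ε₀ > (0 : ℝ), ∀ ε, 0 < ε → ε ≤ ε₀ →
      ∃ δ > (0 : ℝ), ball (0 : EuclideanSpace ℝ (Fin p)) δ ⊆ G '' ball 0 ε :=
  stmt10_general hp G hGan hG0 hnc hGsing hGreg
end

section
/- Let F : (ℂⁿ,0) → (ℂᵖ,0), n ≥ p > 0, be a holomorphic map germ such that the germ of the fibre F⁻¹(0) at the origin has complex dimension n − p and Sing F ∩ F⁻¹(0) = {0} (i.e., F⁻¹(0) is an isolated complete intersection singularity). Then F is a nice map germ (NMG): both the image Im F and the discriminant F(Sing F) are well-defined set germs at 0 ∈ ℂᵖ. -/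
/-!
If regular points of the fibre `F⁻¹(0)` accumulate at `0`, then by the submersion theorem every
`F(B_ε)` is a neighbourhood of `0`, so `Im F` is the full germ `(ℂᵖ, 0)`. Otherwise, since
`Sing F ∩ F⁻¹(0) = {0}`, the point `0` is isolated in `F⁻¹(0)`. In either case the discriminant, and in
the second case also the image, is the image of a closed set `T` with `T ∩ F⁻¹(0) = {0}` near
`0`; for `a < b` the compact set `F(T ∩ (B̄_b ∖ B_a))` misses `0`, so near `0` the images of
`T ∩ B_a` and `T ∩ B_b` agree.
-/

open Metric Set

/-- The singular set of a holomorphic map `F : ℂⁿ → ℂᵖ`: points where the complex derivative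
has rank `< p`. -/
noncomputable def csingSet {n p : ℕ}
    (F : EuclideanSpace ℂ (Fin n) → EuclideanSpace ℂ (Fin p)) :
    Set (EuclideanSpace ℂ (Fin n)) :=
  {x | LinearMap.rank
      ((fderiv ℂ F x : EuclideanSpace ℂ (Fin n) →L[ℂ] EuclideanSpace ℂ (Fin p)) :
        EuclideanSpace ℂ (Fin n) →ₗ[ℂ] EuclideanSpace ℂ (Fin p)) < (p : Cardinal)}

open Filter Topology

theorem Metric.exists_ball_inter_eq_of_eventuallyEq {X : Type*} [PseudoMetricSpace X]
    {A B : Set X} {y : X} (h : A =ᶠ[𝓝 y] B) : ∃ δ > 0, A ∩ ball y δ = B ∩ ball y δ := by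
  obtain ⟨δ, hδ, hAB⟩ := Metric.eventually_nhds_iff_ball.1 h
  exact ⟨δ, hδ, ext fun z => and_congr_left fun hz => (hAB z hz).to_iff⟩

section IsolatedFibre

variable {X Y : Type*} [PseudoMetricSpace X] [ProperSpace X] [MetricSpace Y] {f : X → Y}
  {T : Set X} {x₀ : X} {y : Y}

theorem image_inter_ball_eventuallyLE (hf : Continuous f) (hT : IsClosed T) {a b : ℝ}
    (hfib : T ∩ f ⁻¹' {y} ∩ closedBall x₀ b ⊆ {x₀}) (ha : 0 < a) :
    f '' (T ∩ ball x₀ b) ≤ᶠ[𝓝 y] f '' (T ∩ ball x₀ a) := by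
  set K := T ∩ closedBall x₀ b ∩ (ball x₀ a)ᶜ
  have hK : IsCompact K :=
    ((isCompact_closedBall x₀ b).inter_left hT).inter_right isOpen_ball.isClosed_compl
  have hyK : y ∉ f '' K := by
    rintro ⟨x, ⟨⟨hxT, hxb⟩, hxa⟩, hxy⟩
    obtain rfl : x = x₀ := hfib ⟨⟨hxT, hxy⟩, hxb⟩
    exact hxa (mem_ball_self ha)
  filter_upwards [(hK.image hf).isClosed.isOpen_compl.mem_nhds hyK]
  rintro _ hK ⟨x, ⟨hxT, hxb⟩, rfl⟩
  refine ⟨x, ⟨hxT, ?_⟩, rfl⟩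
  by_contra hxa
  exact hK ⟨x, ⟨⟨hxT, ball_subset_closedBall hxb⟩, hxa⟩, rfl⟩

theorem image_inter_ball_eventuallyEq (hf : Continuous f) (hT : IsClosed T) {ε a b : ℝ}
    (hfib : T ∩ f ⁻¹' {y} ∩ closedBall x₀ ε ⊆ {x₀})
    (ha : 0 < a) (haε : a ≤ ε) (hb : 0 < b) (hbε : b ≤ ε) :
    f '' (T ∩ ball x₀ a) =ᶠ[𝓝 y] f '' (T ∩ ball x₀ b) := by
  have hfib' {c : ℝ} (hc : c ≤ ε) : T ∩ f ⁻¹' {y} ∩ closedBall x₀ c ⊆ {x₀} :=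
    subset_trans (by gcongr) hfib
  exact (image_inter_ball_eventuallyLE hf hT (hfib' haε) hb).antisymm
    (image_inter_ball_eventuallyLE hf hT (hfib' hbε) ha)

end IsolatedFibre

theorem HasStrictFDerivAt.image_mem_nhds {𝕜 E F : Type*} [NontriviallyNormedField 𝕜]
    [NormedAddCommGroup E] [NormedSpace 𝕜 E] [CompleteSpace E]
    [NormedAddCommGroup F] [NormedSpace 𝕜 F] [CompleteSpace F]
    {f : E → F} {f' : E →L[𝕜] F} {x : E} {U : Set E} (hf : HasStrictFDerivAt f f' x)
    (hf' : f'.range = ⊤) (hU : U ∈ 𝓝 x) : f '' U ∈ 𝓝 (f x) :=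
  hf.map_nhds_eq_of_surj hf' ▸ image_mem_map hU

theorem LinearMap.range_eq_top_of_finrank_le_rank {K V W : Type*} [DivisionRing K]
    [AddCommGroup V] [Module K V] [AddCommGroup W] [Module K W] [FiniteDimensional K W]
    (g : V →ₗ[K] W) (hg : (Module.finrank K W : Cardinal) ≤ g.rank) : LinearMap.range g = ⊤ := by
  rw [LinearMap.rank, ← Module.finrank_eq_rank, Nat.cast_le] at hg
  exact Submodule.eq_top_of_finrank_eq ((Submodule.finrank_le _).antisymm hg)

section Singular

variable {n p : ℕ} {F : EuclideanSpace ℂ (Fin n) → EuclideanSpace ℂ (Fin p)}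

theorem csingSet_eq_preimage :
    csingSet F = fderiv ℂ F ⁻¹' {g | (p : Cardinal) ≤
      (g : EuclideanSpace ℂ (Fin n) →ₗ[ℂ] EuclideanSpace ℂ (Fin p)).rank}ᶜ := by
  ext x
  simp [csingSet, not_le]

theorem isClosed_csingSet (hF : Continuous (fderiv ℂ F)) : IsClosed (csingSet F) :=
  csingSet_eq_preimage ▸ (isOpen_setOfPred_nat_le_rank p).isClosed_compl.preimage hF

theorem range_fderiv_eq_top_of_notMem_csingSet {x : EuclideanSpace ℂ (Fin n)}
    (hx : x ∉ csingSet F) : (fderiv ℂ F x).range = ⊤ := by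
  refine LinearMap.range_eq_top_of_finrank_le_rank _ ?_
  simpa [csingSet, finrank_euclideanSpace_fin] using hx

theorem image_ball_mem_nhds_of_frequently_regular (hF : ContDiff ℂ 1 F)
    {x₀ : EuclideanSpace ℂ (Fin n)} {y : EuclideanSpace ℂ (Fin p)}
    (hreg : ∃ᶠ x in 𝓝 x₀, F x = y ∧ x ∉ csingSet F) {ε : ℝ} (hε : 0 < ε) :
    F '' ball x₀ ε ∈ 𝓝 y := by
  obtain ⟨x, ⟨rfl, hx⟩, hxε⟩ := (hreg.and_eventually (ball_mem_nhds x₀ hε)).exists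
  exact (hF.contDiffAt.hasStrictFDerivAt one_ne_zero).image_mem_nhds
    (range_fderiv_eq_top_of_notMem_csingSet hx) (isOpen_ball.mem_nhds hxε)

theorem exists_image_ball_eventuallyEq (hF : ContDiff ℂ 1 F)
    {x₀ : EuclideanSpace ℂ (Fin n)} {y : EuclideanSpace ℂ (Fin p)} {ε : ℝ} (hε : 0 < ε)
    (hiso : csingSet F ∩ F ⁻¹' {y} ∩ closedBall x₀ ε ⊆ {x₀}) :
    ∃ r > 0, ∀ a b, 0 < a → a ≤ r → 0 < b → b ≤ r →
      F '' ball x₀ a =ᶠ[𝓝 y] F '' ball x₀ b := by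
  by_cases hreg : ∃ᶠ x in 𝓝 x₀, F x = y ∧ x ∉ csingSet F
  · refine ⟨ε, hε, fun a b ha _ hb _ => ?_⟩
    exact (eventuallyEq_univ.2 (image_ball_mem_nhds_of_frequently_regular hF hreg ha)).trans
      (eventuallyEq_univ.2 (image_ball_mem_nhds_of_frequently_regular hF hreg hb)).symm
  · obtain ⟨r, hr, hsing⟩ := Metric.eventually_nhds_iff_ball.1 (not_frequently.1 hreg)
    have hfib : univ ∩ F ⁻¹' {y} ∩ closedBall x₀ (min ε (r / 2)) ⊆ {x₀} := by
      rintro x ⟨⟨-, hxy⟩, hx⟩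
      have hxr : x ∈ ball x₀ r :=
        closedBall_subset_ball (by linarith [min_le_right ε (r / 2)]) hx
      have hxS : x ∈ csingSet F := not_and_not_right.1 (hsing x hxr) hxy
      exact hiso ⟨⟨hxS, hxy⟩, closedBall_subset_closedBall (min_le_left _ _) hx⟩
    refine ⟨min ε (r / 2), by positivity, fun a b ha haε hb hbε => ?_⟩
    simpa using image_inter_ball_eventuallyEq hF.continuous isClosed_univ hfib ha haε hb hbε

end Singular

theorem stmt14_general {n p : ℕ}
    (F : EuclideanSpace ℂ (Fin n) → EuclideanSpace ℂ (Fin p))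
    (hFan : ∀ x, AnalyticAt ℂ F x)
    (hiso : ∃ ε > (0 : ℝ), csingSet F ∩ F ⁻¹' {0} ∩ ball 0 ε = {0}) :
    ∃ ε₀ > (0 : ℝ), ∀ ε₁ ε₂, 0 < ε₁ → ε₁ ≤ ε₀ → 0 < ε₂ → ε₂ ≤ ε₀ →
      (∃ δ > (0 : ℝ),
        F '' ball 0 ε₁ ∩ ball 0 δ = F '' ball 0 ε₂ ∩ ball 0 δ) ∧
      (∃ δ > (0 : ℝ),
        F '' (csingSet F ∩ ball 0 ε₁) ∩ ball 0 δ =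
          F '' (csingSet F ∩ ball 0 ε₂) ∩ ball 0 δ) := by
  obtain ⟨ε, hε, hiso⟩ := hiso
  have hF : ContDiff ℂ 1 F := contDiff_iff_contDiffAt.2 fun x => (hFan x).contDiffAt
  have hsing : csingSet F ∩ F ⁻¹' {0} ∩ closedBall 0 (ε / 2) ⊆ {0} :=
    hiso ▸ inter_subset_inter_right _ (closedBall_subset_ball (by linarith))
  obtain ⟨r, hr, himage⟩ := exists_image_ball_eventuallyEq hF (by positivity) hsing
  refine ⟨min (ε / 2) r, by positivity, fun a b ha haε hb hbε => ⟨?_, ?_⟩⟩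
  · exact exists_ball_inter_eq_of_eventuallyEq
      (himage a b ha (haε.trans (min_le_right _ _)) hb (hbε.trans (min_le_right _ _)))
  · have hS : IsClosed (csingSet F) := isClosed_csingSet (hF.continuous_fderiv one_ne_zero)
    exact exists_ball_inter_eq_of_eventuallyEq <|
      image_inter_ball_eventuallyEq hF.continuous hS hsing
        ha (haε.trans (min_le_left _ _)) hb (hbε.trans (min_le_left _ _))

/-- Let `F : (ℂⁿ,0) → (ℂᵖ,0)`, `n ≥ p > 0`, be a holomorphic map germ whose
fibre `F⁻¹(0)` has local complex dimension `n - p` at the origin (encoded via Hausdorff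
dimension) and with `Sing F ∩ F⁻¹(0) = {0}` as germs at the origin (an ICIS). Then `F` is a
nice map germ: both `Im F` and the discriminant `F(Sing F)` are well-defined set germs
at `0 ∈ ℂᵖ`. -/
theorem stmt14 {n p : ℕ} (hp : 0 < p) (hpn : p ≤ n)
    (F : EuclideanSpace ℂ (Fin n) → EuclideanSpace ℂ (Fin p))
    (hFan : ∀ x, AnalyticAt ℂ F x) (hF0 : F 0 = 0)
    (hdim : ∃ ε₀ > (0 : ℝ), ∀ ε, 0 < ε → ε ≤ ε₀ →
      dimH (F ⁻¹' {0} ∩ ball (0 : EuclideanSpace ℂ (Fin n)) ε) = (2 * (n - p) : ℕ))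
    (hiso : ∃ ε > (0 : ℝ), csingSet F ∩ F ⁻¹' {0} ∩ ball 0 ε = {0}) :
    ∃ ε₀ > (0 : ℝ), ∀ ε₁ ε₂, 0 < ε₁ → ε₁ ≤ ε₀ → 0 < ε₂ → ε₂ ≤ ε₀ →
      (∃ δ > (0 : ℝ),
        F '' ball 0 ε₁ ∩ ball 0 δ = F '' ball 0 ε₂ ∩ ball 0 δ) ∧
      (∃ δ > (0 : ℝ),
        F '' (csingSet F ∩ ball 0 ε₁) ∩ ball 0 δ =
          F '' (csingSet F ∩ ball 0 ε₂) ∩ ball 0 δ) :=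
  stmt14_general F hFan hiso
end

section
/- The polynomial map F : ℝ² → ℝ², F(x,y) = (x, xy), does not have a well-defined image set germ at the origin: there exist 0 < ε₁ < ε₂ such that for every δ > 0 one has F(B_{ε₁}) ∩ B_δ ≠ F(B_{ε₂}) ∩ B_δ; moreover, for every ε > 0 the image F(B_ε) contains no open neighborhood of the origin in ℝ². -/
/-!
Over a point `(a, c)` with `a ≠ 0` the map `(x, y) ↦ (x, xy)` has the single preimage `(a, c / a)`.
Hence the points `(t, 3t/2)`, which approach the origin as `t → 0`, lie in `F(B₂)` but never in
`F(B₁)`, since their preimage `(t, 3/2)` has norm at least `3/2`. On the line `x = 0` the image is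
just the origin, and every neighbourhood of the origin contains points `(0, b)` with `b ≠ 0`.
-/

open Metric Set

namespace EuclideanSpace

lemma norm_sq_fin_two (v : EuclideanSpace ℝ (Fin 2)) : ‖v‖ ^ 2 = v 0 ^ 2 + v 1 ^ 2 := by
  simp [EuclideanSpace.norm_sq_eq, Fin.sum_univ_two]

lemma mem_ball_zero_fin_two_iff {r : ℝ} (hr : 0 ≤ r) (a b : ℝ) :
    !₂[a, b] ∈ ball (0 : EuclideanSpace ℝ (Fin 2)) r ↔ a ^ 2 + b ^ 2 < r ^ 2 := by
  rw [mem_ball_zero_iff, ← sq_lt_sq₀ (norm_nonneg _) hr, norm_sq_fin_two]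
  simp

end EuclideanSpace

open EuclideanSpace

section BlowUp

variable {F : EuclideanSpace ℝ (Fin 2) → EuclideanSpace ℝ (Fin 2)}

lemma apply_eq_of_blowUp (hF : ∀ v : EuclideanSpace ℝ (Fin 2), F v 0 = v 0 ∧ F v 1 = v 0 * v 1)
    (v : EuclideanSpace ℝ (Fin 2)) : F v = !₂[v 0, v 0 * v 1] := by
  ext i
  fin_cases i <;> simp [hF]

lemma eq_of_apply_eq_of_blowUp
    (hF : ∀ v : EuclideanSpace ℝ (Fin 2), F v 0 = v 0 ∧ F v 1 = v 0 * v 1)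
    {v : EuclideanSpace ℝ (Fin 2)} {a b : ℝ} (ha : a ≠ 0) (h : F v = !₂[a, a * b]) :
    v = !₂[a, b] := by
  rw [apply_eq_of_blowUp hF] at h
  have h0 : v 0 = a := by simpa using congrArg (· 0) h
  have h1 : v 0 * v 1 = a * b := by simpa using congrArg (· 1) h
  rw [h0] at h1
  ext i
  fin_cases i
  · simpa using h0
  · simpa using mul_left_cancel₀ ha h1

lemma apply_ne_of_blowUp (hF : ∀ v : EuclideanSpace ℝ (Fin 2), F v 0 = v 0 ∧ F v 1 = v 0 * v 1)
    (v : EuclideanSpace ℝ (Fin 2)) {b : ℝ} (hb : b ≠ 0) : F v ≠ !₂[0, b] := by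
  intro h
  rw [apply_eq_of_blowUp hF] at h
  have h0 : v 0 = 0 := by simpa using congrArg (· 0) h
  have h1 : v 0 * v 1 = b := by simpa using congrArg (· 1) h
  simp [h0, eq_comm, hb] at h1

lemma image_notMem_nhds_zero_of_blowUp
    (hF : ∀ v : EuclideanSpace ℝ (Fin 2), F v 0 = v 0 ∧ F v 1 = v 0 * v 1)
    (s : Set (EuclideanSpace ℝ (Fin 2))) : F '' s ∉ nhds 0 := by
  intro h
  obtain ⟨r, hr, hsub⟩ := Metric.mem_nhds_iff.mp h
  have hmem : !₂[0, r / 2] ∈ ball (0 : EuclideanSpace ℝ (Fin 2)) r := by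
    rw [mem_ball_zero_fin_two_iff hr.le]
    nlinarith
  obtain ⟨v, -, hv⟩ := hsub hmem
  exact apply_ne_of_blowUp hF v (by positivity) hv

lemma image_ball_one_inter_ne_image_ball_two_inter_of_blowUp
    (hF : ∀ v : EuclideanSpace ℝ (Fin 2), F v 0 = v 0 ∧ F v 1 = v 0 * v 1)
    {δ : ℝ} (hδ : 0 < δ) : F '' ball 0 1 ∩ ball 0 δ ≠ F '' ball 0 2 ∩ ball 0 δ := by
  set t := min (δ / 2) (1 / 2)
  have ht : 0 < t := lt_min (by positivity) (by norm_num)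
  have htδ : t ≤ δ / 2 := min_le_left _ _
  have ht_half : t ≤ 1 / 2 := min_le_right _ _
  have hw_ball : !₂[t, t * (3 / 2)] ∈ ball (0 : EuclideanSpace ℝ (Fin 2)) δ := by
    rw [mem_ball_zero_fin_two_iff hδ.le]
    nlinarith
  have hw_image : !₂[t, t * (3 / 2)] ∈ F '' ball 0 2 := by
    refine ⟨!₂[t, 3 / 2], ?_, ?_⟩
    · rw [mem_ball_zero_fin_two_iff zero_le_two]
      nlinarith
    · simp [apply_eq_of_blowUp hF]
  have hw_not_image : !₂[t, t * (3 / 2)] ∉ F '' ball 0 1 := by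
    rintro ⟨v, hv, hFv⟩
    rw [eq_of_apply_eq_of_blowUp hF ht.ne' hFv, mem_ball_zero_fin_two_iff zero_le_one] at hv
    nlinarith
  intro h
  have hw : !₂[t, t * (3 / 2)] ∈ F '' ball 0 2 ∩ ball 0 δ := ⟨hw_image, hw_ball⟩
  rw [← h] at hw
  exact hw_not_image hw.1

end BlowUp

/-- The polynomial map `F : ℝ² → ℝ²`, `F(x,y) = (x, xy)`, does not have
a well-defined image set germ at the origin: there are radii `0 < ε₁ < ε₂` such that for
every `δ > 0` one has `F(B_{ε₁}) ∩ B_δ ≠ F(B_{ε₂}) ∩ B_δ`; moreover for every `ε > 0` the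
image `F(B_ε)` contains no open neighbourhood of the origin in `ℝ²`. -/
theorem stmt16
    (F : EuclideanSpace ℝ (Fin 2) → EuclideanSpace ℝ (Fin 2))
    (hF : ∀ v : EuclideanSpace ℝ (Fin 2), F v 0 = v 0 ∧ F v 1 = v 0 * v 1) :
    (∃ ε₁ ε₂ : ℝ, 0 < ε₁ ∧ ε₁ < ε₂ ∧ ∀ δ > (0 : ℝ),
      F '' ball 0 ε₁ ∩ ball 0 δ ≠ F '' ball 0 ε₂ ∩ ball 0 δ) ∧
    (∀ ε > (0 : ℝ), F '' ball 0 ε ∉ nhds (0 : EuclideanSpace ℝ (Fin 2))) :=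
  ⟨⟨1, 2, one_pos, one_lt_two,
      fun _ hδ => image_ball_one_inter_ne_image_ball_two_inter_of_blowUp hF hδ⟩,
    fun ε _ => image_notMem_nhds_zero_of_blowUp hF (ball 0 ε)⟩
end
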